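/- arXiv:1502.01694 — 8 statements merged into one kernel-verified Lean document; each statement's English description precedes it below -/
import Mathlib

section
/- If a bi-step lattice L_{b̃} is contained in a finite union L_{b_1} ∪ ... ∪ L_{b_m} of bi-step lattices, then there exists some j with L_{b̃} ⊆ L_{b_j}, and hence b̃ ≤ b_j componentwise. -/
open Set

/-- `t` is an integer multiple of `a`. -/
def isMul (a t : ℝ) : Prop := ∃ n : ℤ, t = n * a

/-- Bi-step lattice `L_b`: dense spacing `λ_i` where `b i = true`,
coarse spacing `k_i λ_i` where `b i = false`. -/
def biLat {d : ℕ} (lam : Fin d → ℝ) (k : Fin d → ℤ) (b : Fin d → Bool) :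
    Set (Fin d → ℝ) :=
  {t | ∀ i, if b i then isMul (lam i) (t i) else isMul ((k i : ℝ) * lam i) (t i)}

lemma not_isMul_self {a : ℝ} {k : ℤ} (ha : 0 < a) (hk : 1 < k) :
    ¬ isMul ((k : ℝ) * a) a := by
  rintro ⟨n, hn⟩
  have h1 : (1 : ℝ) = (n * k : ℤ) := by
    push_cast
    have ha' := ha.ne'
    have : (1:ℝ) * a = (n * k) * a := by rw [one_mul]; nth_rewrite 1 [hn]; ring
    exact mul_right_cancel₀ ha' this
  have h2 : (n * k : ℤ) = 1 := by exact_mod_cast h1.symm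
  have : k ∣ 1 := ⟨n, by linarith [h2]⟩
  have := Int.le_of_dvd one_pos this
  omega

theorem stmt3 {d : ℕ} (hd : 1 ≤ d) (lam : Fin d → ℝ) (k : Fin d → ℤ)
    (hlam : ∀ i, 0 < lam i) (hk : ∀ i, 1 < k i)
    {m : ℕ} (hm : 1 ≤ m) (bs : Fin m → Fin d → Bool) (bt : Fin d → Bool)
    (h : biLat lam k bt ⊆ ⋃ j, biLat lam k (bs j)) :
    ∃ j, biLat lam k bt ⊆ biLat lam k (bs j) ∧ bt ≤ bs j := by
  set t : Fin d → ℝ := fun i => if bt i then lam i else 0 with ht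
  have htmem : t ∈ biLat lam k bt := by
    intro i
    by_cases hb : bt i
    · simp only [hb, if_true]
      exact ⟨1, by simp [ht, hb]⟩
    · simp only [hb, if_false, ht]
      exact ⟨0, by simp [hb]⟩
  obtain ⟨S, ⟨j, rfl⟩, hjmem⟩ := h htmem
  have hle : bt ≤ bs j := by
    intro i
    by_cases hb : bt i
    · have := hjmem i
      by_cases hbj : bs j i
      · simp [hb, hbj]
      · exfalso
        simp only [hbj, if_false, ht, hb, if_true] at this
        exact not_isMul_self (hlam i) (hk i) this
    · simp [hb]
  refine ⟨j, ?_, hle⟩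
  intro x hx i
  have hxi := hx i
  by_cases hbj : bs j i
  · simp only [hbj, if_true]
    by_cases hb : bt i
    · simpa [hb] using hxi
    · simp only [hb, if_false] at hxi
      obtain ⟨n, hn⟩ := hxi
      exact ⟨n * k i, by push_cast; rw [hn]; ring⟩
  · have hb : bt i = false := by
      have := hle i; revert this; cases h1 : bt i <;> simp [hbj]
    simp only [hbj, if_false]
    simpa [hb] using hxi
end

section
/- For finite collections B and B' of bi-step vectors, the Manhattan set M(B) = ∪_{b∈B} L_b is contained in M(B') = ∪_{b'∈B'} L_{b'} if and only if for every b ∈ B there exists b' ∈ B' with b ≤ b' componentwise. -/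
open Set

theorem stmt4 {d : ℕ} (hd : 1 ≤ d) (lam : Fin d → ℝ) (k : Fin d → ℤ)
    (hlam : ∀ i, 0 < lam i) (hk : ∀ i, 1 < k i)
    (B B' : Finset (Fin d → Bool)) :
    (⋃ b ∈ B, biLat lam k b) ⊆ (⋃ b' ∈ B', biLat lam k b') ↔
      ∀ b ∈ B, ∃ b' ∈ B', b ≤ b' := by
  constructor
  · intro h b hb
    classical
    set t : Fin d → ℝ := fun i => if b i = true then lam i else 0 with ht
    have hti : ∀ i, b i = true → t i = lam i := fun i hi => by simp [ht, hi]
    have htf : ∀ i, b i = false → t i = 0 := fun i hi => by simp [ht, hi]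
    have htb : t ∈ biLat lam k b := by
      intro i
      by_cases hbi : b i = true
      · rw [if_pos hbi, hti i hbi]
        exact ⟨1, by ring⟩
      · rw [if_neg hbi, htf i (Bool.not_eq_true _ ▸ hbi)]
        exact ⟨0, by ring⟩
    have : t ∈ ⋃ b' ∈ B', biLat lam k b' := h (mem_iUnion₂.2 ⟨b, hb, htb⟩)
    obtain ⟨b', hb', htb'⟩ := mem_iUnion₂.1 this
    refine ⟨b', hb', fun i => ?_⟩
    by_cases hbi : b i = true
    · have : b' i = true := by
        by_contra hbi'
        have := htb' i
        rw [if_neg hbi'] at this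
        obtain ⟨n, hn⟩ := this
        rw [hti i hbi] at hn
        have hl := (hlam i).ne'
        have h1 : (1 : ℝ) * lam i = (n * k i) * lam i := by linarith [hn]
        have h2 : (1 : ℝ) = n * k i := mul_right_cancel₀ hl h1
        have h3 : (n * k i : ℤ) = 1 := by exact_mod_cast h2.symm
        have hdvd : (k i : ℤ) ∣ 1 := ⟨n, by rw [← h3]; ring⟩
        have := Int.le_of_dvd one_pos hdvd
        linarith [hk i]
      simp [hbi, this]
    · simp [Bool.eq_false_iff.2 hbi]
  · intro h t htmem
    obtain ⟨b, hb, htb⟩ := mem_iUnion₂.1 htmem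
    obtain ⟨b', hb', hle⟩ := h b hb
    refine mem_iUnion₂.2 ⟨b', hb', fun i => ?_⟩
    have hi := htb i
    by_cases hbi' : b' i = true
    · rw [if_pos hbi']
      by_cases hbi : b i = true
      · rw [if_pos hbi] at hi; exact hi
      · rw [if_neg hbi] at hi
        obtain ⟨n, hn⟩ := hi
        exact ⟨n * k i, by push_cast; linarith [hn]⟩
    · rw [if_neg hbi']
      have hbi : b i = false := by
        have := hle i
        cases hb : b i
        · rfl
        · rw [hb] at this
          exact absurd (le_antisymm (Bool.le_true _) this).symm (fun hx => hbi' hx.symm)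
      rw [hbi] at hi
      simpa using hi
end

section
/- The closure B̄ of B is the largest collection generating M(B): if M(B') = M(B) for some collection B', then B' ⊆ B̄. -/
open Set

theorem stmt6 {d : ℕ} (hd : 1 ≤ d) (lam : Fin d → ℝ) (k : Fin d → ℤ)
    (hlam : ∀ i, 0 < lam i) (hk : ∀ i, 1 < k i)
    (B B' : Finset (Fin d → Bool))
    (h : (⋃ b' ∈ B', biLat lam k b') = ⋃ b ∈ B, biLat lam k b) :
    ∀ b' ∈ B', b' ∈ {c : Fin d → Bool | ∃ b ∈ B, c ≤ b} := by
  intro b' hb'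
  set t : Fin d → ℝ := fun i => if b' i then lam i else 0 with ht
  have htmem : t ∈ biLat lam k b' := by
    intro i
    by_cases hbi : b' i
    · simp only [biLat, hbi, if_true]
      exact ⟨1, by simp [t, hbi]⟩
    · simp only [biLat, hbi, if_false, Bool.false_eq_true]
      exact ⟨0, by simp [t, hbi]⟩
  have : t ∈ ⋃ b' ∈ B', biLat lam k b' := mem_biUnion hb' htmem
  rw [h] at this
  obtain ⟨b, hbB, htb⟩ := mem_iUnion₂.mp this
  refine ⟨b, hbB, fun i => ?_⟩
  have hi := htb i
  by_cases hbi : b' i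
  · by_cases hbi2 : b i
    · simp [hbi, hbi2]
    · exfalso
      simp only [hbi2, if_false] at hi
      obtain ⟨n, hn⟩ := hi
      have : t i = lam i := by simp [t, hbi]
      rw [this] at hn
      have hlne : lam i ≠ 0 := (hlam i).ne'
      have h1 : (1 : ℝ) = (n : ℝ) * (k i : ℝ) := by
        have heq : (1 : ℝ) * lam i = ((n : ℝ) * (k i : ℝ)) * lam i := by
          rw [one_mul]; nth_rewrite 1 [hn]; ring
        exact mul_right_cancel₀ hlne heq
      have h1' : (1 : ℤ) = n * k i := by exact_mod_cast h1
      have : k i ∣ 1 := Dvd.intro n (by linarith [h1'])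
      have := Int.le_of_dvd one_pos this
      linarith [hk i]
  · simp [hbi]
end

section
/- For a finite collection B of bi-step vectors, the number of points of the Manhattan set M(B) in the fundamental cell ∏_{i=1}^d [0, k_i λ_i) equals Σ_{b ∈ B̄} ∏_{i : b_i = 1} (k_i − 1), where B̄ is the downward closure of B. -/
open Set

/-- The partition atom `V_b` of the dense lattice. -/
def Vset {d : ℕ} (lam : Fin d → ℝ) (k : Fin d → ℤ) (b : Fin d → Bool) :
    Set (Fin d → ℝ) :=
  {t | ∀ i, if b i then isMul (lam i) (t i) ∧ ¬ isMul ((k i : ℝ) * lam i) (t i)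
       else isMul ((k i : ℝ) * lam i) (t i)}

/-- Fundamental cell `∏ [0, k_i λ_i)`. -/
def Fcell {d : ℕ} (lam : Fin d → ℝ) (k : Fin d → ℤ) : Set (Fin d → ℝ) :=
  {t | ∀ i, 0 ≤ t i ∧ t i < (k i : ℝ) * lam i}

lemma isMul_of_isMul_mul {a t : ℝ} (k : ℤ) (h : isMul ((k : ℝ) * a) t) : isMul a t := by
  obtain ⟨n, hn⟩ := h
  exact ⟨n * k, by rw [hn]; push_cast; ring⟩

open Classical in
theorem stmt10 {d : ℕ} (hd : 1 ≤ d) (lam : Fin d → ℝ) (k : Fin d → ℤ)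
    (hlam : ∀ i, 0 < lam i) (hk : ∀ i, 1 < k i)
    (B : Finset (Fin d → Bool)) :
    ((⋃ b ∈ B, biLat lam k b) ∩ Fcell lam k).ncard =
      ∑ b' : Fin d → Bool,
        if ∃ b ∈ B, b' ≤ b then ∏ i, (if b' i then (k i - 1).toNat else 1) else 0 := by
  classical
  set Bbar : Finset (Fin d → Bool) :=
    Finset.univ.filter (fun b' => ∃ b ∈ B, b' ≤ b) with hBbar
  set F : (Fin d → Bool) → Finset (Fin d → ℝ) :=
    fun b' => (Fintype.piFinset fun i =>
      if b' i then Finset.Ioo (0 : ℤ) (k i) else {0}).image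
      (fun n i => (n i : ℝ) * lam i) with hF
  -- the coe of `F b'` is `Vset b' ∩ Fcell`
  have hFcoe : ∀ b' : Fin d → Bool,
      (F b' : Set (Fin d → ℝ)) = Vset lam k b' ∩ Fcell lam k := by
    intro b'
    ext t
    simp only [hF, Finset.coe_image, Set.mem_image, Finset.mem_coe,
      Fintype.mem_piFinset, Set.mem_inter_iff, Vset, Fcell, Set.mem_setOf_eq]
    constructor
    · rintro ⟨n, hn, rfl⟩
      have key : ∀ i, (if b' i then
          (isMul (lam i) ((n i : ℝ) * lam i) ∧
            ¬ isMul ((k i : ℝ) * lam i) ((n i : ℝ) * lam i))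
          else isMul ((k i : ℝ) * lam i) ((n i : ℝ) * lam i)) ∧
          (0 ≤ (n i : ℝ) * lam i ∧ (n i : ℝ) * lam i < (k i : ℝ) * lam i) := by
        intro i
        have hni := hn i
        by_cases hb : b' i
        · simp only [hb, if_true] at hni ⊢
          rw [Finset.mem_Ioo] at hni
          obtain ⟨h0, hk'⟩ := hni
          refine ⟨⟨⟨n i, rfl⟩, ?_⟩, ?_, ?_⟩
          · rintro ⟨m, hm⟩
            have h1 : (n i : ℝ) * lam i = ((m * k i : ℤ) : ℝ) * lam i := by
              rw [hm]; push_cast; ring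
            have h2 : n i = m * k i := by
              have := mul_right_cancel₀ (hlam i).ne' h1
              exact_mod_cast this
            have hdvd : k i ∣ n i := ⟨m, by rw [h2]; ring⟩
            have := Int.le_of_dvd h0 hdvd
            omega
          · exact mul_nonneg (by exact_mod_cast h0.le) (hlam i).le
          · have : (n i : ℝ) < (k i : ℝ) := by exact_mod_cast hk'
            exact mul_lt_mul_of_pos_right this (hlam i)
        · simp only [hb, Bool.false_eq_true, if_false, Finset.mem_singleton] at hni ⊢
          rw [hni]
          have hkpos : (0 : ℝ) < (k i : ℝ) := by
            exact_mod_cast lt_trans Int.zero_lt_one (hk i)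
          refine ⟨⟨0, by push_cast; ring⟩, by simp, ?_⟩
          simp only [Int.cast_zero, zero_mul]
          exact mul_pos hkpos (hlam i)
      exact ⟨fun i => (key i).1, fun i => (key i).2⟩
    · rintro ⟨hV, hC⟩
      have key : ∀ i, ∃ m : ℤ,
          (m ∈ if b' i then Finset.Ioo (0 : ℤ) (k i) else ({0} : Finset ℤ)) ∧
          (m : ℝ) * lam i = t i := by
        intro i
        have hVi := hV i
        obtain ⟨h0, h1⟩ := hC i
        by_cases hb : b' i
        · simp only [hb, if_true] at hVi ⊢
          obtain ⟨⟨m, hm⟩, hnk⟩ := hVi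
          refine ⟨m, ?_, hm.symm⟩
          rw [Finset.mem_Ioo]
          constructor
          · rcases lt_or_ge 0 m with h | h
            · exact h
            · exfalso
              rcases h.lt_or_eq with h | h
              · have : (m : ℝ) * lam i < 0 := by
                  apply mul_neg_of_neg_of_pos _ (hlam i)
                  exact_mod_cast h
                rw [hm] at h0; linarith
              · apply hnk
                exact ⟨0, by rw [hm, h]; push_cast; ring⟩
          · by_contra h
            push_neg at h
            have : (k i : ℝ) * lam i ≤ (m : ℝ) * lam i := by
              apply mul_le_mul_of_nonneg_right _ (hlam i).le
              exact_mod_cast h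
            rw [hm] at h1; linarith
        · simp only [hb, Bool.false_eq_true, if_false, Finset.mem_singleton] at hVi ⊢
          obtain ⟨m, hm⟩ := hVi
          refine ⟨0, rfl, ?_⟩
          have hm0 : m = 0 := by
            by_contra hne
            have hkl : (0 : ℝ) < (k i : ℝ) * lam i := by
              have h' : (0 : ℝ) < (k i : ℝ) := by exact_mod_cast (lt_trans Int.zero_lt_one (hk i))
              exact mul_pos h' (hlam i)
            rcases lt_or_gt_of_ne hne with h | h
            · have : (m : ℝ) * ((k i : ℝ) * lam i) < 0 := by
                apply mul_neg_of_neg_of_pos _ hkl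
                exact_mod_cast h
              rw [hm] at h0; linarith
            · have : 1 * ((k i : ℝ) * lam i) ≤ (m : ℝ) * ((k i : ℝ) * lam i) := by
                apply mul_le_mul_of_nonneg_right _ hkl.le
                exact_mod_cast h
              rw [hm] at h1; linarith
          rw [hm, hm0]
          push_cast; ring
      choose m hm1 hm2 using key
      exact ⟨m, hm1, funext hm2⟩
  -- the main set identity
  have hset : (⋃ b ∈ B, biLat lam k b) ∩ Fcell lam k = ↑(Bbar.biUnion F) := by
    ext t
    simp only [Finset.coe_biUnion, Set.mem_iUnion, Finset.mem_coe, hBbar,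
      Finset.mem_filter, Finset.mem_univ, true_and, Set.mem_inter_iff,
      Set.mem_iUnion, exists_prop]
    constructor
    · rintro ⟨⟨b, hbB, htb⟩, htF⟩
      set b' : Fin d → Bool := fun i =>
        if isMul ((k i : ℝ) * lam i) (t i) then false else b i with hb'
      have hle : b' ≤ b := by
        intro i
        simp only [hb']
        split
        · exact Bool.false_le _
        · exact le_rfl
      refine ⟨b', ⟨b, hbB, hle⟩, ?_⟩
      rw [← Finset.mem_coe, hFcoe]
      refine ⟨?_, htF⟩
      intro i
      have htbi := htb i
      simp only [hb']
      by_cases hkm : isMul ((k i : ℝ) * lam i) (t i)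
      · rw [if_pos hkm, if_neg Bool.false_ne_true]
        exact hkm
      · rw [if_neg hkm]
        by_cases hbi : b i = true
        · rw [if_pos hbi]
          rw [if_pos hbi] at htbi
          exact ⟨htbi, hkm⟩
        · rw [if_neg hbi]
          rw [if_neg hbi] at htbi
          exact htbi
    · rintro ⟨b', ⟨b, hbB, hle⟩, htFb⟩
      rw [← Finset.mem_coe, hFcoe] at htFb
      obtain ⟨htV, htF⟩ := htFb
      refine ⟨⟨b, hbB, ?_⟩, htF⟩
      intro i
      have htVi := htV i
      by_cases hbi : b i
      · simp only [hbi, if_true]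
        by_cases hbi' : b' i
        · simp only [hbi', if_true] at htVi
          exact htVi.1
        · simp only [hbi', if_false] at htVi
          exact isMul_of_isMul_mul (k i) htVi
      · have h2 := hle i
        rw [Bool.not_eq_true] at hbi
        rw [hbi] at h2
        have hbi' : b' i = false := le_bot_iff.mp h2
        rw [if_neg (by rw [hbi]; exact Bool.false_ne_true)]
        rw [if_neg (by rw [hbi']; exact Bool.false_ne_true)] at htVi
        exact htVi
  -- disjointness of the F b'
  have hinj : Function.Injective (fun (n : Fin d → ℤ) (i : Fin d) => (n i : ℝ) * lam i) := by
    intro n m hnm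
    funext i
    have := congrFun hnm i
    have h2 := mul_right_cancel₀ (hlam i).ne' this
    exact_mod_cast h2
  have hdisj : ∀ x ∈ Bbar, ∀ y ∈ Bbar, x ≠ y → Disjoint (F x) (F y) := by
    intro x _ y _ hxy
    rw [Finset.disjoint_left]
    intro t htx hty
    have h1 : t ∈ (F x : Set (Fin d → ℝ)) := Finset.mem_coe.mpr htx
    have h2 : t ∈ (F y : Set (Fin d → ℝ)) := Finset.mem_coe.mpr hty
    rw [hFcoe] at h1 h2
    apply hxy
    funext i
    have hx := h1.1 i
    have hy := h2.1 i
    by_cases hxi : x i <;> by_cases hyi : y i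
    · rw [hxi, hyi]
    · simp only [hxi, hyi, if_true, if_false] at hx hy
      exact absurd hy hx.2
    · simp only [hxi, hyi, if_true, if_false] at hx hy
      exact absurd hx hy.2
    · rw [Bool.not_eq_true] at hxi hyi
      rw [hxi, hyi]
  -- cardinality of each F b'
  have hcard : ∀ b' : Fin d → Bool,
      (F b').card = ∏ i, (if b' i then (k i - 1).toNat else 1) := by
    intro b'
    rw [hF]
    rw [Finset.card_image_of_injective _ hinj, Fintype.card_piFinset]
    apply Finset.prod_congr rfl
    intro i _
    by_cases hb : b' i
    · simp [hb, Int.card_Ioo]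
    · simp [hb]
  -- put it together
  rw [hset, Set.ncard_coe_finset, Finset.card_biUnion hdisj]
  rw [← Finset.sum_filter, ← hBbar]
  exact Finset.sum_congr rfl fun b' _ => hcard b'
end

section
/- For any bi-step vectors s, b, b' with b ≤ s and b' ≤ s componentwise, and any nonzero v in the reciprocal lattice L*_s, the translated atom A^{b'} + v is disjoint from A^b. -/
open Set

/-- Nyquist region `N_b` of the bi-step lattice `L_b`. -/
def nyq {d : ℕ} (lam : Fin d → ℝ) (k : Fin d → ℤ) (b : Fin d → Bool) :
    Set (Fin d → ℝ) :=
  {u | ∀ i, if b i then |u i| < 1 / (2 * lam i)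
       else |u i| < 1 / (2 * ((k i : ℝ) * lam i))}

/-- Manhattan atom `A^b`. -/
def atom {d : ℕ} (lam : Fin d → ℝ) (k : Fin d → ℤ) (b : Fin d → Bool) :
    Set (Fin d → ℝ) :=
  {u | ∀ i, if b i then 1 / (2 * ((k i : ℝ) * lam i)) ≤ |u i| ∧ |u i| < 1 / (2 * lam i)
       else |u i| < 1 / (2 * ((k i : ℝ) * lam i))}

/-- Reciprocal lattice `L*_s`. -/
def recipLat {d : ℕ} (lam : Fin d → ℝ) (k : Fin d → ℤ) (s : Fin d → Bool) :
    Set (Fin d → ℝ) :=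
  {v | ∀ i, if s i then ∃ n : ℤ, v i = n / lam i
       else ∃ n : ℤ, v i = n / ((k i : ℝ) * lam i)}

theorem stmt16 {d : ℕ} (hd : 1 ≤ d) (lam : Fin d → ℝ) (k : Fin d → ℤ)
    (hlam : ∀ i, 0 < lam i) (hk : ∀ i, 1 < k i)
    (s b b' : Fin d → Bool) (hb : b ≤ s) (hb' : b' ≤ s)
    (v : Fin d → ℝ) (hv : v ∈ recipLat lam k s) (hv0 : v ≠ 0) :
    Disjoint ((· + v) '' atom lam k b') (atom lam k b) := by
  rw [Set.disjoint_left]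
  rintro x ⟨u, hu, rfl⟩ hx
  obtain ⟨i, hi⟩ := Function.ne_iff.mp hv0
  have hki : (1:ℝ) < k i := by exact_mod_cast hk i
  have hlam' := hlam i
  have hkl : 0 < (k i : ℝ) * lam i := by positivity
  have key : ∀ (c : Fin d → Bool), c ≤ s → ∀ w : Fin d → ℝ, w ∈ atom lam k c →
      (s i = true → |w i| < 1 / (2 * lam i)) ∧
      (s i = false → |w i| < 1 / (2 * ((k i:ℝ) * lam i))) := by
    intro c hc w hw
    have h := hw i
    constructor
    · intro _
      by_cases hci : c i
      · simp only [hci, if_true] at h; exact h.2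
      · simp only [hci, if_false] at h
        calc |w i| < 1 / (2 * ((k i:ℝ) * lam i)) := h
          _ ≤ 1 / (2 * lam i) := by
            apply one_div_le_one_div_of_le (by positivity)
            nlinarith
    · intro hsi
      have hci : c i = false := by
        have h2 := hc i; rw [hsi] at h2
        cases hcb : c i with
        | false => rfl
        | true => rw [hcb] at h2; exact absurd h2 (by simp)
      simp only [hci, if_false] at h; exact h
  have tri : |v i| ≤ |u i + v i| + |u i| := by
    have h := abs_sub (u i + v i) (u i)
    rwa [add_sub_cancel_left] at h
  have hvi := hv i
  by_cases hsi : s i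
  · rw [if_pos hsi] at hvi
    obtain ⟨n, hn⟩ := hvi
    have hn0 : n ≠ 0 := by rintro rfl; simp at hn; exact hi hn
    have h1 : (1:ℝ) ≤ |(n:ℝ)| := by exact_mod_cast Int.one_le_abs hn0
    have hvabs : |v i| = |(n:ℝ)| / lam i := by rw [hn, abs_div, abs_of_pos hlam']
    have hlb : 1 / lam i ≤ |v i| := by
      rw [hvabs]; gcongr
    have h2 := (key b' hb' u hu).1 hsi
    have h3 := (key b hb _ hx).1 hsi
    simp only [Pi.add_apply] at h3
    have : 1 / (2 * lam i) + 1 / (2 * lam i) = 1 / lam i := by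
      field_simp; norm_num
    linarith
  · rw [if_neg hsi] at hvi
    obtain ⟨n, hn⟩ := hvi
    have hn0 : n ≠ 0 := by rintro rfl; simp at hn; exact hi hn
    have h1 : (1:ℝ) ≤ |(n:ℝ)| := by exact_mod_cast Int.one_le_abs hn0
    have hvabs : |v i| = |(n:ℝ)| / ((k i : ℝ) * lam i) := by
      rw [hn, abs_div, abs_of_pos hkl]
    have hlb : 1 / ((k i : ℝ) * lam i) ≤ |v i| := by
      rw [hvabs]; gcongr
    have hsi' : s i = false := by simpa using hsi
    have h2 := (key b' hb' u hu).2 hsi'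
    have h3 := (key b hb _ hx).2 hsi'
    simp only [Pi.add_apply] at h3
    have : 1 / (2 * ((k i:ℝ) * lam i)) + 1 / (2 * ((k i:ℝ) * lam i)) = 1 / ((k i:ℝ) * lam i) := by
      field_simp; norm_num
    linarith
end

section
/- Let s, b, b' be bi-step vectors such that there exists a dimension i with s_i = 1 and b_i ≠ b'_i (i.e., (b XOR b') ∧ s ≠ 0). Then for every v in the reciprocal lattice L*_s (including v = 0 when additionally b ≠ b'), the translated atom A^{b'} + v is disjoint from A^b. -/
open Set

theorem stmt17 {d : ℕ} (hd : 1 ≤ d) (lam : Fin d → ℝ) (k : Fin d → ℤ)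
    (hlam : ∀ i, 0 < lam i) (hk : ∀ i, 1 < k i)
    (s b b' : Fin d → Bool) (h : ∃ i, s i = true ∧ b i ≠ b' i)
    (v : Fin d → ℝ) (hv : v ∈ recipLat lam k s) :
    Disjoint ((· + v) '' atom lam k b') (atom lam k b) := by
  rw [Set.disjoint_left]
  rintro x ⟨u, hu, rfl⟩ hx
  obtain ⟨i, hsi, hbi⟩ := h
  have hvi := hv i
  rw [hsi] at hvi
  simp only [if_true] at hvi
  obtain ⟨n, hn⟩ := hvi
  have hu' := hu i
  have hx' := hx i
  have hL : (0:ℝ) < lam i := hlam i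
  have hK : (2:ℝ) ≤ (k i : ℝ) := by exact_mod_cast hk i
  have hKL : (0:ℝ) < 2 * ((k i : ℝ) * lam i) := by nlinarith
  have hxi : (u + v) i = u i + n / lam i := by simp [hn]
  simp only [show (fun x => x + v) u = u + v from rfl] at hx'
  rw [hxi] at hx'
  have h2 : |(n:ℝ)| ≤ (|u i + n/lam i| + |u i|) * lam i := by
    rw [← div_le_iff₀ hL]
    calc |(n:ℝ)| / lam i = |(n:ℝ)/lam i| := by rw [abs_div, abs_of_pos hL]
      _ = |(u i + n/lam i) + (-(u i))| := by ring_nf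
      _ ≤ |u i + n/lam i| + |(-(u i))| := abs_add_le _ _
      _ = |u i + n/lam i| + |u i| := by rw [abs_neg]
  rcases Bool.eq_false_or_eq_true (b i) with hb | hb <;>
  rcases Bool.eq_false_or_eq_true (b' i) with hb' | hb' <;>
    simp only [hb, hb', if_true, if_false, Bool.false_eq_true, Bool.true_eq_false,
      ne_eq, not_true, not_false_iff] at hbi hu' hx' <;>
    try exact hbi rfl
  · -- b i = true, b' i = false
    rcases eq_or_ne n 0 with h0 | h0
    · rw [h0] at hx'
      simp only [Int.cast_zero, zero_div, add_zero] at hx'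
      linarith [hu', hx'.1]
    · have h1 : (1:ℝ) ≤ |(n:ℝ)| := by exact_mod_cast Int.one_le_abs h0
      rw [lt_div_iff₀ hKL] at hu'
      have hx2 := hx'.2
      rw [lt_div_iff₀ (by linarith : (0:ℝ) < 2 * lam i)] at hx2
      nlinarith [abs_nonneg (u i), abs_nonneg (u i + (n:ℝ)/lam i),
        mul_nonneg (abs_nonneg (u i)) hL.le]
  · -- b i = false, b' i = true
    rcases eq_or_ne n 0 with h0 | h0
    · rw [h0] at hx'
      simp only [Int.cast_zero, zero_div, add_zero] at hx'
      linarith [hu'.1, hx']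
    · have h1 : (1:ℝ) ≤ |(n:ℝ)| := by exact_mod_cast Int.one_le_abs h0
      rw [lt_div_iff₀ hKL] at hx'
      have hu2 := hu'.2
      rw [lt_div_iff₀ (by linarith : (0:ℝ) < 2 * lam i)] at hu2
      nlinarith [abs_nonneg (u i), abs_nonneg (u i + (n:ℝ)/lam i),
        mul_nonneg (abs_nonneg (u i + (n:ℝ)/lam i)) hL.le]
end

section
/- If b' and s are bi-step vectors with Hamming weight ‖b'‖ ≤ ‖s‖, then for every nonzero v in the reciprocal lattice L*_s, the translated atom A^{b'} + v is disjoint from A^s. -/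
open Set

/-- Hamming weight of a bi-step vector. -/
def wt {d : ℕ} (b : Fin d → Bool) : ℕ := (Finset.univ.filter fun i => b i = true).card

/-! If `u` lies in `A^{b'}` and `u + v` in `A^s` with `v ∈ L*_s`, then coordinatewise `v i` is a
multiple of a step `c` while `u i` and `u i + v i` both lie in `(-c/2, c/2)`, which forces
`v i = 0`. Where `s i = 1` the step is `1/λ_i` and every atom fits in that window; where
`s i = 0` and `b' i = 0` the step is `1/(k_i λ_i)` and both points lie in the inner window. Hence
`s ≤ b'`, and a coordinate with `v i ≠ 0` has `s i = 0`, `b' i = 1`, so `‖s‖ < ‖b'‖`. -/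

theorem Int.eq_zero_of_abs_lt_of_abs_add_div_lt {c x : ℝ} (hc : 0 < c) {n : ℤ}
    (hx : |x| < 1 / (2 * c)) (hxn : |x + n / c| < 1 / (2 * c)) : n = 0 := by
  have hnc : |(n : ℝ) / c| < 1 / c := by
    rw [abs_lt] at hx hxn ⊢
    constructor <;> linarith [show 1 / (2 * c) = 1 / c / 2 by ring]
  rw [abs_div, abs_of_pos hc, div_lt_div_iff_of_pos_right hc] at hnc
  exact Int.abs_lt_one_iff.mp (by exact_mod_cast hnc)

section Atom

variable {d : ℕ} {lam : Fin d → ℝ} {k : Fin d → ℤ} {b : Fin d → Bool} {u : Fin d → ℝ}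

theorem abs_mem_Ico_of_mem_atom (hu : u ∈ atom lam k b) {i : Fin d} (hb : b i = true) :
    |u i| ∈ Ico (1 / (2 * ((k i : ℝ) * lam i))) (1 / (2 * lam i)) := by
  simpa [hb] using hu i

theorem abs_lt_of_mem_atom_of_eq_false (hu : u ∈ atom lam k b) {i : Fin d} (hb : b i = false) :
    |u i| < 1 / (2 * ((k i : ℝ) * lam i)) := by
  simpa [hb] using hu i

theorem abs_lt_of_mem_atom (hlam : ∀ i, 0 < lam i) (hk : ∀ i, 1 ≤ k i)
    (hu : u ∈ atom lam k b) (i : Fin d) : |u i| < 1 / (2 * lam i) := by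
  cases hb : b i
  · have hki : (1 : ℝ) ≤ k i := by exact_mod_cast hk i
    calc |u i| < 1 / (2 * ((k i : ℝ) * lam i)) := abs_lt_of_mem_atom_of_eq_false hu hb
      _ ≤ 1 / (2 * lam i) := by
        have := hlam i
        gcongr; exact le_mul_of_one_le_left this.le hki
  · exact (abs_mem_Ico_of_mem_atom hu hb).2

end Atom

section Translate

variable {d : ℕ} {lam : Fin d → ℝ} {k : Fin d → ℤ} {b' s : Fin d → Bool} {u v : Fin d → ℝ}

theorem eq_zero_of_translate_mem_atom_of_eq_true (hlam : ∀ i, 0 < lam i) (hk : ∀ i, 1 ≤ k i)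
    (hu : u ∈ atom lam k b') (huv : u + v ∈ atom lam k s) (hv : v ∈ recipLat lam k s)
    {i : Fin d} (hs : s i = true) : v i = 0 := by
  obtain ⟨n, hn⟩ : ∃ n : ℤ, v i = n / lam i := by simpa [hs] using hv i
  have hn0 := Int.eq_zero_of_abs_lt_of_abs_add_div_lt (hlam i) (abs_lt_of_mem_atom hlam hk hu i)
    (by simpa [hn] using abs_lt_of_mem_atom hlam hk huv i)
  simp [hn, hn0]

theorem eq_true_of_translate_mem_atom_of_eq_true (hlam : ∀ i, 0 < lam i) (hk : ∀ i, 1 ≤ k i)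
    (hu : u ∈ atom lam k b') (huv : u + v ∈ atom lam k s) (hv : v ∈ recipLat lam k s)
    {i : Fin d} (hs : s i = true) : b' i = true := by
  have hvi := eq_zero_of_translate_mem_atom_of_eq_true hlam hk hu huv hv hs
  by_contra hb
  have hlow := (abs_mem_Ico_of_mem_atom huv hs).1
  have hup := abs_lt_of_mem_atom_of_eq_false hu (Bool.of_not_eq_true hb)
  simp only [Pi.add_apply, hvi, add_zero] at hlow
  linarith

theorem eq_false_and_eq_true_of_translate_mem_atom (hlam : ∀ i, 0 < lam i) (hk : ∀ i, 1 ≤ k i)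
    (hu : u ∈ atom lam k b') (huv : u + v ∈ atom lam k s) (hv : v ∈ recipLat lam k s)
    {i : Fin d} (hvi : v i ≠ 0) : s i = false ∧ b' i = true := by
  have hs : s i = false := by
    by_contra hs
    exact hvi (eq_zero_of_translate_mem_atom_of_eq_true hlam hk hu huv hv (Bool.of_not_eq_false hs))
  refine ⟨hs, ?_⟩
  by_contra hb
  obtain ⟨n, hn⟩ : ∃ n : ℤ, v i = n / ((k i : ℝ) * lam i) := by simpa [hs] using hv i
  have hkl : 0 < (k i : ℝ) * lam i := mul_pos (Int.cast_pos.mpr (by linarith [hk i])) (hlam i)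
  have hn0 := Int.eq_zero_of_abs_lt_of_abs_add_div_lt hkl
    (abs_lt_of_mem_atom_of_eq_false hu (Bool.of_not_eq_true hb))
    (by simpa [hn] using abs_lt_of_mem_atom_of_eq_false huv hs)
  exact hvi (by simp [hn, hn0])

end Translate

theorem wt_lt_wt_of_imp {d : ℕ} {b s : Fin d → Bool} (hle : ∀ i, s i = true → b i = true)
    {i : Fin d} (hs : s i = false) (hb : b i = true) : wt s < wt b := by
  refine Finset.card_lt_card ⟨fun j hj => ?_, fun hsub => ?_⟩
  · simp only [Finset.mem_filter, Finset.mem_univ, true_and] at hj ⊢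
    exact hle j hj
  · simpa [hs, hb] using @hsub i

theorem stmt18_general {d : ℕ} (lam : Fin d → ℝ) (k : Fin d → ℤ)
    (hlam : ∀ i, 0 < lam i) (hk : ∀ i, 1 < k i)
    (b' s : Fin d → Bool) (hw : wt b' ≤ wt s)
    (v : Fin d → ℝ) (hv : v ∈ recipLat lam k s) (hv0 : v ≠ 0) :
    Disjoint ((· + v) '' atom lam k b') (atom lam k s) := by
  rw [Set.disjoint_left]
  rintro _ ⟨u, hu, rfl⟩ huv
  have hk' : ∀ i, 1 ≤ k i := fun i => (hk i).le
  obtain ⟨i, hvi⟩ : ∃ i, v i ≠ 0 := Function.ne_iff.mp hv0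
  obtain ⟨hs, hb⟩ := eq_false_and_eq_true_of_translate_mem_atom hlam hk' hu huv hv hvi
  have hsb : ∀ j, s j = true → b' j = true := fun _ =>
    eq_true_of_translate_mem_atom_of_eq_true hlam hk' hu huv hv
  have hlt := wt_lt_wt_of_imp hsb hs hb
  omega

theorem stmt18 {d : ℕ} (hd : 1 ≤ d) (lam : Fin d → ℝ) (k : Fin d → ℤ)
    (hlam : ∀ i, 0 < lam i) (hk : ∀ i, 1 < k i)
    (b' s : Fin d → Bool) (hw : wt b' ≤ wt s)
    (v : Fin d → ℝ) (hv : v ∈ recipLat lam k s) (hv0 : v ≠ 0) :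
    Disjoint ((· + v) '' atom lam k b') (atom lam k s) :=
  stmt18_general lam k hlam hk b' s hw v hv hv0
end

section
/- For any finite collection B of bi-step vectors, the Lebesgue measure of the Manhattan region M(B) = ∪_{b∈B} N_b equals (Σ_{b ∈ B̄} ∏_{i : b_i = 1}(k_i − 1)) / ∏_{i=1}^d (k_i λ_i), which equals the sampling density of the Manhattan set M(B) (the number of Manhattan sample points per fundamental cell divided by the cell volume). -/
open Set MeasureTheory

/-!
In each coordinate the sets in question are built from a small factor `S i` and a large
factor `G i ⊇ S i`: for the Nyquist regions the intervals of half-widths `1/(2 k_i λ_i)` and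
`1/(2 λ_i)`, for the lattice points in the cell the sets `{0}` and `λ_i ℤ ∩ [0, k_i λ_i)`.
Splitting every `G i` into `S i` and the shell `G i \ S i`, a point of
`⋃_{b ∈ B} ∏ (b_i ? G_i : S_i)` lies in exactly one product of pieces, namely the one indexed
by the pattern `b'` of coordinates in which it leaves `S`, and these patterns are exactly the
elements of `B̄`. The shell is `k_i - 1` times as large as `S i`, both for Lebesgue measure and
for cardinality, which gives the common numerator `∑_{b' ∈ B̄} ∏_{b'_i = 1} (k_i - 1)`.
-/

section Shells

variable {ι : Type*} {α : ι → Type*} {S G : ∀ i, Set (α i)}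

variable (S G) in
def boxOf (b : ι → Bool) : Set (∀ i, α i) :=
  Set.pi univ fun i => if b i then G i else S i

variable (S G) in
def shellOf (b : ι → Bool) : Set (∀ i, α i) :=
  Set.pi univ fun i => if b i then G i \ S i else S i

theorem eq_of_mem_shellOf {x : ∀ i, α i} {b b' : ι → Bool} (hb : x ∈ shellOf S G b)
    (hb' : x ∈ shellOf S G b') : b = b' := by
  funext i
  have h := hb i trivial
  have h' := hb' i trivial
  cases hbi : b i <;> cases hbi' : b' i <;> simp only [hbi, hbi'] at h h' <;> simp_all

theorem pairwiseDisjoint_shellOf (s : Set (ι → Bool)) : s.PairwiseDisjoint (shellOf S G) :=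
  fun _ _ _ _ hne => Set.disjoint_left.2 fun _ hx hx' => hne (eq_of_mem_shellOf hx hx')

theorem shellOf_subset_boxOf (hSG : ∀ i, S i ⊆ G i) {b' b : ι → Bool} (h : b' ≤ b) :
    shellOf S G b' ⊆ boxOf S G b :=
  Set.pi_mono fun i _ => by
    have hi := h i
    cases hb' : b' i <;> cases hb : b i <;> simp_all [Bool.le_iff_imp]

theorem exists_mem_shellOf_of_mem_boxOf {x : ∀ i, α i} {b : ι → Bool} (hx : x ∈ boxOf S G b) :
    ∃ b' ≤ b, x ∈ shellOf S G b' := by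
  classical
  refine ⟨fun i => decide (x i ∉ S i), fun i => ?_, fun i _ => ?_⟩ <;>
  · have hi := hx i trivial
    by_cases hxS : x i ∈ S i <;> cases hb : b i <;> simp_all

open Classical in
theorem biUnion_boxOf_eq [Fintype ι] [DecidableEq ι] (hSG : ∀ i, S i ⊆ G i)
    (B : Finset (ι → Bool)) :
    ⋃ b ∈ B, boxOf S G b =
      ⋃ b' ∈ Finset.univ.filter (fun b' => ∃ b ∈ B, b' ≤ b), shellOf S G b' := by
  ext x
  simp only [mem_iUnion, Finset.mem_filter, Finset.mem_univ, true_and, exists_prop]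
  constructor
  · rintro ⟨b, hb, hx⟩
    obtain ⟨b', hb'b, hx'⟩ := exists_mem_shellOf_of_mem_boxOf hx
    exact ⟨b', ⟨b, hb, hb'b⟩, hx'⟩
  · rintro ⟨b', ⟨b, hb, hb'b⟩, hx⟩
    exact ⟨b, hb, shellOf_subset_boxOf hSG hb'b hx⟩

open Classical in
theorem pi_biUnion_boxOf [Fintype ι] [DecidableEq ι] [∀ i, MeasurableSpace (α i)]
    (μ : ∀ i, Measure (α i)) [∀ i, SigmaFinite (μ i)] (hSG : ∀ i, S i ⊆ G i)
    (hS : ∀ i, MeasurableSet (S i)) (hG : ∀ i, MeasurableSet (G i)) (B : Finset (ι → Bool)) :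
    Measure.pi μ (⋃ b ∈ B, boxOf S G b) =
      ∑ b', if ∃ b ∈ B, b' ≤ b then ∏ i, μ i (if b' i then G i \ S i else S i) else 0 := by
  have hmeas (b' : ι → Bool) : MeasurableSet (shellOf S G b') :=
    .univ_pi fun i => by split_ifs; exacts [(hG i).diff (hS i), hS i]
  rw [biUnion_boxOf_eq hSG, measure_biUnion_finset (pairwiseDisjoint_shellOf _)
    fun b' _ => hmeas b', Finset.sum_filter]
  simp only [shellOf, Measure.pi_pi]

open Classical in
theorem encard_biUnion_boxOf [Fintype ι] [DecidableEq ι] (hSG : ∀ i, S i ⊆ G i)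
    (B : Finset (ι → Bool)) :
    (⋃ b ∈ B, boxOf S G b).encard =
      ∑ b', if ∃ b ∈ B, b' ≤ b then ∏ i, (if b' i then G i \ S i else S i).encard else 0 := by
  rw [biUnion_boxOf_eq hSG, ← Finset.set_biUnion_coe,
    Finset.finite_toSet _ |>.encard_biUnion (pairwiseDisjoint_shellOf _),
    finsum_mem_coe_finset, Finset.sum_filter]
  simp only [shellOf, encard_pi_eq_prod_encard]

end Shells

open Classical in
noncomputable def manhattanCount {d : ℕ} (k : Fin d → ℤ) (B : Finset (Fin d → Bool)) : ℝ :=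
  ∑ b' : Fin d → Bool,
    if ∃ b ∈ B, b' ≤ b then ∏ i, (if b' i then ((k i : ℝ) - 1) else 1) else 0

section Nyquist

open Metric

theorem volume_ball_diff_ball (x : ℝ) {r R : ℝ} (hr : 0 ≤ r) (hrR : r ≤ R) :
    volume (ball x R \ ball x r) = ENNReal.ofReal (2 * (R - r)) := by
  rw [measure_sdiff (ball_subset_ball hrR) measurableSet_ball.nullMeasurableSet
    measure_ball_lt_top.ne, Real.volume_ball, Real.volume_ball,
    ← ENNReal.ofReal_sub _ (by positivity), mul_sub]

theorem nyq_eq_boxOf {d : ℕ} (lam : Fin d → ℝ) (k : Fin d → ℤ) (b : Fin d → Bool) :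
    nyq lam k b = boxOf (fun i => ball 0 (1 / (2 * ((k i : ℝ) * lam i))))
      (fun i => ball 0 (1 / (2 * lam i))) b := by
  ext u
  simp only [nyq, boxOf, mem_ofPred_eq, mem_pi, mem_univ, true_imp_iff]
  refine forall_congr' fun i => ?_
  split_ifs <;> simp [Real.norm_eq_abs]

theorem one_div_two_mul_mul_le {a κ : ℝ} (ha : 0 < a) (hκ : 1 ≤ κ) :
    1 / (2 * (κ * a)) ≤ 1 / (2 * a) := by
  gcongr
  nlinarith

theorem volume_ite_ball_diff_ball {a κ : ℝ} (ha : 0 < a) (hκ : 1 ≤ κ) (c : Bool) :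
    volume (if c then ball (0 : ℝ) (1 / (2 * a)) \ ball 0 (1 / (2 * (κ * a)))
      else ball 0 (1 / (2 * (κ * a)))) = ENNReal.ofReal ((if c then κ - 1 else 1) / (κ * a)) := by
  cases c
  · simp only [Bool.false_eq_true, if_false, Real.volume_ball]
    congr 1
    field_simp
  · simp only [if_true, volume_ball_diff_ball 0 (by positivity) (one_div_two_mul_mul_le ha hκ)]
    congr 1
    field_simp

theorem volume_biUnion_nyq {d : ℕ} (lam : Fin d → ℝ) (k : Fin d → ℤ)
    (hlam : ∀ i, 0 < lam i) (hk : ∀ i, 1 ≤ k i) (B : Finset (Fin d → Bool)) :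
    volume (⋃ b ∈ B, nyq lam k b) =
      ENNReal.ofReal (manhattanCount k B / ∏ i, ((k i : ℝ) * lam i)) := by
  have hkR (i : Fin d) : (1 : ℝ) ≤ k i := by exact_mod_cast hk i
  have hkl (i : Fin d) : 0 < (k i : ℝ) * lam i := mul_pos (by linarith [hkR i]) (hlam i)
  have hc (c : Bool) (i : Fin d) : 0 ≤ if c then (k i : ℝ) - 1 else 1 := by
    have := hkR i
    split_ifs <;> linarith
  simp_rw [nyq_eq_boxOf]
  rw [volume_pi, pi_biUnion_boxOf _
    (fun i => ball_subset_ball (one_div_two_mul_mul_le (hlam i) (hkR i)))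
    (fun _ => measurableSet_ball) (fun _ => measurableSet_ball)]
  simp only [volume_ite_ball_diff_ball (hlam _) (hkR _)]
  rw [manhattanCount, Finset.sum_div, ENNReal.ofReal_sum_of_nonneg]
  · refine Finset.sum_congr rfl fun b' _ => ?_
    split_ifs
    · rw [← Finset.prod_div_distrib, ENNReal.ofReal_prod_of_nonneg fun i _ =>
        div_nonneg (hc _ i) (hkl i).le]
    · simp
  · intro b' _
    refine div_nonneg ?_ (Finset.prod_pos fun i _ => hkl i).le
    split_ifs
    exacts [Finset.prod_nonneg fun i _ => hc _ i, le_rfl]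

end Nyquist

section Lattice

def multiplesIco (a L : ℝ) : Set ℝ := {t | isMul a t} ∩ Ico 0 L

theorem multiplesIco_mul_subset (n : ℤ) (a L : ℝ) : multiplesIco (n * a) L ⊆ multiplesIco a L :=
  fun _ ⟨⟨m, hm⟩, ht⟩ => ⟨⟨m * n, by rw [hm]; push_cast; ring⟩, ht⟩

theorem multiplesIco_mul_eq_image {a : ℝ} (ha : 0 < a) (n : ℤ) :
    multiplesIco a (n * a) = (fun m : ℤ => (m : ℝ) * a) '' Ico 0 n := by
  ext t
  simp only [multiplesIco, isMul, mem_inter_iff, mem_ofPred_eq, mem_Ico, mem_image]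
  constructor
  · rintro ⟨⟨m, rfl⟩, h0, h1⟩
    refine ⟨m, ⟨?_, ?_⟩, rfl⟩
    · exact_mod_cast nonneg_of_mul_nonneg_left h0 ha
    · exact_mod_cast lt_of_mul_lt_mul_right h1 ha.le
  · rintro ⟨m, ⟨h0, h1⟩, rfl⟩
    refine ⟨⟨m, rfl⟩, by positivity, ?_⟩
    gcongr

theorem multiplesIco_self {a : ℝ} (ha : 0 < a) : multiplesIco a a = {0} := by
  have h := multiplesIco_mul_eq_image ha 1
  rw [Int.cast_one, one_mul] at h
  rw [h, show Ico (0 : ℤ) 1 = {0} by ext; simp; omega, image_singleton, Int.cast_zero, zero_mul]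

theorem encard_multiplesIco_mul {a : ℝ} (ha : 0 < a) (n : ℤ) :
    (multiplesIco a (n * a)).encard = n.toNat := by
  have hinj : Function.Injective fun m : ℤ => (m : ℝ) * a :=
    (mul_left_injective₀ ha.ne').comp Int.cast_injective
  rw [multiplesIco_mul_eq_image ha, hinj.encard_image, ← Finset.coe_Ico,
    encard_coe_eq_coe_finsetCard, Int.card_Ico, sub_zero]

theorem biLat_inter_Fcell {d : ℕ} (lam : Fin d → ℝ) (k : Fin d → ℤ) (b : Fin d → Bool) :
    biLat lam k b ∩ Fcell lam k = boxOf (fun i => multiplesIco (k i * lam i) (k i * lam i))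
      (fun i => multiplesIco (lam i) (k i * lam i)) b := by
  ext t
  simp only [biLat, Fcell, boxOf, multiplesIco, mem_inter_iff, mem_ofPred_eq, mem_pi, mem_univ,
    true_imp_iff, ← forall_and]
  refine forall_congr' fun i => ?_
  split_ifs <;> rfl

theorem encard_ite_multiplesIco_diff {a : ℝ} (ha : 0 < a) {n : ℤ} (hn : 1 ≤ n) (c : Bool) :
    (if c then multiplesIco a (n * a) \ multiplesIco (n * a) (n * a)
      else multiplesIco (n * a) (n * a)).encard = ((if c then (n - 1).toNat else 1 : ℕ) : ℕ∞) := by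
  have hS := multiplesIco_self (mul_pos (by exact_mod_cast hn : (0 : ℝ) < n) ha)
  cases c
  · simp [hS]
  · have h := encard_sdiff_add_encard_of_subset (multiplesIco_mul_subset n a (n * a))
    rw [encard_multiplesIco_mul ha, hS, encard_singleton] at h
    rw [show n.toNat = (n - 1).toNat + 1 by omega, Nat.cast_add, Nat.cast_one] at h
    rw [if_pos rfl, if_pos rfl, hS]
    exact WithTop.add_right_cancel ENat.one_ne_top h

theorem ncard_biUnion_biLat_inter_Fcell {d : ℕ} (lam : Fin d → ℝ) (k : Fin d → ℤ)
    (hlam : ∀ i, 0 < lam i) (hk : ∀ i, 1 ≤ k i) (B : Finset (Fin d → Bool)) :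
    (((⋃ b ∈ B, biLat lam k b) ∩ Fcell lam k).ncard : ℝ) = manhattanCount k B := by
  classical
  have hencard : ((⋃ b ∈ B, biLat lam k b) ∩ Fcell lam k).encard =
      ((∑ b' : Fin d → Bool, if ∃ b ∈ B, b' ≤ b then
        ∏ i, (if b' i then (k i - 1).toNat else 1) else 0 : ℕ) : ℕ∞) := by
    simp_rw [iUnion₂_inter, biLat_inter_Fcell]
    rw [encard_biUnion_boxOf fun i => multiplesIco_mul_subset _ _ _]
    simp only [encard_ite_multiplesIco_diff (hlam _) (hk _)]
    push_cast
    rfl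
  have hk' (i : Fin d) : (((k i - 1).toNat : ℕ) : ℝ) = k i - 1 := by
    rw [← Int.cast_natCast, Int.toNat_of_nonneg (sub_nonneg.2 (hk i)), Int.cast_sub, Int.cast_one]
  rw [ncard_def, hencard, ENat.toNat_natCast, manhattanCount]
  push_cast
  simp only [hk']

end Lattice

open Classical in
theorem stmt19_general {d : ℕ} (lam : Fin d → ℝ) (k : Fin d → ℤ)
    (hlam : ∀ i, 0 < lam i) (hk : ∀ i, 1 < k i)
    (B : Finset (Fin d → Bool)) :
    volume (⋃ b ∈ B, nyq lam k b) =
      ENNReal.ofReal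
        ((∑ b' : Fin d → Bool,
            if ∃ b ∈ B, b' ≤ b then ∏ i, (if b' i then ((k i : ℝ) - 1) else 1) else 0) /
          ∏ i, ((k i : ℝ) * lam i)) ∧
    (((⋃ b ∈ B, biLat lam k b) ∩ Fcell lam k).ncard : ℝ) / ∏ i, ((k i : ℝ) * lam i) =
      (∑ b' : Fin d → Bool,
          if ∃ b ∈ B, b' ≤ b then ∏ i, (if b' i then ((k i : ℝ) - 1) else 1) else 0) /
        ∏ i, ((k i : ℝ) * lam i) := by
  have hk' (i : Fin d) : 1 ≤ k i := (hk i).le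
  exact ⟨volume_biUnion_nyq lam k hlam hk' B,
    by rw [ncard_biUnion_biLat_inter_Fcell lam k hlam hk' B, manhattanCount]⟩

open Classical in
theorem stmt19 {d : ℕ} (hd : 1 ≤ d) (lam : Fin d → ℝ) (k : Fin d → ℤ)
    (hlam : ∀ i, 0 < lam i) (hk : ∀ i, 1 < k i)
    (B : Finset (Fin d → Bool)) :
    volume (⋃ b ∈ B, nyq lam k b) =
      ENNReal.ofReal
        ((∑ b' : Fin d → Bool,
            if ∃ b ∈ B, b' ≤ b then ∏ i, (if b' i then ((k i : ℝ) - 1) else 1) else 0) /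
          ∏ i, ((k i : ℝ) * lam i)) ∧
    (((⋃ b ∈ B, biLat lam k b) ∩ Fcell lam k).ncard : ℝ) / ∏ i, ((k i : ℝ) * lam i) =
      (∑ b' : Fin d → Bool,
          if ∃ b ∈ B, b' ≤ b then ∏ i, (if b' i then ((k i : ℝ) - 1) else 1) else 0) /
        ∏ i, ((k i : ℝ) * lam i) :=
  stmt19_general lam k hlam hk B
end
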